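/- Let A ∈ B^{n×n}, λ ∈ B, K, L a partition of N = {1,...,n}, with L_2, L̃, Λ and (A_{KK})^*_λ as defined, and suppose L_2 = ∅. Then x = (x_K, x_L) ∈ B^n is a (K,L) λ-eigenvector of A if and only if there exist z_{L̃} ∈ B^{|L̃|} and z_K ∈ B^{|K|} such that x_L = λ·1_L ⊕ Λ_{L,L̃} ⊗ z_{L̃} and x_K = λ ⊗ (A_{KK})^* ⊗ A_{KL} ⊗ 1_L ⊕ (A_{KK})^* ⊗ A_{K L̃} ⊗ Λ_{L̃,L̃} ⊗ z_{L̃} ⊕ (A_{KK})^*_λ ⊗ z_K. Moreover, every (K,L) λ-eigenvector x of A satisfies A^* ⊗ x = x. -/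

import Mathlib

noncomputable section

/-- The max-min algebra: the unit interval `[0,1] ⊆ ℝ` with `⊕ = max = ⊔` and `⊗ = min = ⊓`. -/
abbrev B : Type := unitInterval

instance : Fact ((0:ℝ) ≤ 1) := ⟨zero_le_one⟩

/-- Max-min matrix-vector product: `(A ⊗ x)_i = max_j min (A i j) (x j)`. -/
def mmVec {α β : Type*} (A : Matrix α β B) (x : β → B) : α → B :=
  fun i => ⨆ j, A i j ⊓ x j

/-- Max-min matrix-matrix product. -/
def mmMul {α β γ : Type*} (A : Matrix α β B) (C : Matrix β γ B) : Matrix α γ B :=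
  fun i k => ⨆ j, A i j ⊓ C j k

/-- The max-min identity matrix. -/
def mmId (α : Type*) [DecidableEq α] : Matrix α α B :=
  fun i j => if i = j then 1 else 0

/-- Max-min matrix powers, `A^0 = I`. -/
def mmPow {α : Type*} [DecidableEq α] (A : Matrix α α B) : ℕ → Matrix α α B
  | 0 => mmId α
  | k + 1 => mmMul A (mmPow A k)

/-- The metric matrix `A⁺ = A ⊕ A² ⊕ ... ⊕ Aⁿ`. -/
def mmPlus {α : Type*} [Fintype α] [DecidableEq α] (A : Matrix α α B) : Matrix α α B :=
  fun i j => ⨆ k ∈ Finset.Icc 1 (Fintype.card α), mmPow A k i j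

/-- The Kleene star `A* = I ⊕ A ⊕ ... ⊕ A^{n-1}`. -/
def mmStar {α : Type*} [Fintype α] [DecidableEq α] (A : Matrix α α B) : Matrix α α B :=
  fun i j => ⨆ k ∈ Finset.range (Fintype.card α), mmPow A k i j

/-- The matrix `A*_λ`, whose `i`-th column has entries `min (λ, (A⁺)_{ii}, (A*)_{ki})`. -/
def mmStarLam {α : Type*} [Fintype α] [DecidableEq α] (A : Matrix α α B) (lam : B) :
    Matrix α α B :=
  fun k i => lam ⊓ mmPlus A i i ⊓ mmStar A k i

/-- Submatrix of `A` with rows in `P` and columns in `Q`. -/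
def subM {n : ℕ} (A : Matrix (Fin n) (Fin n) B) (P Q : Finset (Fin n)) :
    Matrix ↥P ↥Q B :=
  fun i j => A i j

/-- Subvector of `x` indexed by `P`. -/
def subV {n : ℕ} (x : Fin n → B) (P : Finset (Fin n)) : ↥P → B :=
  fun i => x i

/-- `x` is a `(K,L)` `λ`-eigenvector of `A`: `A ⊗ x = λ ⊗ x`, `x_i ≤ λ` for `i ∈ K`,
`x_i ≥ λ` for `i ∈ L`. -/
def IsKLEig {n : ℕ} (A : Matrix (Fin n) (Fin n) B) (lam : B) (K L : Finset (Fin n))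
    (x : Fin n → B) : Prop :=
  mmVec A x = (fun i => lam ⊓ x i) ∧ (∀ i ∈ K, x i ≤ lam) ∧ (∀ i ∈ L, lam ≤ x i)

/-- `L₁ = {i ∈ L : max_{j∈L} a_{ij} ≥ λ}`. -/
def L1set {n : ℕ} (A : Matrix (Fin n) (Fin n) B) (lam : B) (L : Finset (Fin n)) :
    Finset (Fin n) :=
  L.filter fun i => lam ≤ ⨆ j ∈ L, A i j

/-- `L₂ = {i ∈ L : max_{j∈L} a_{ij} < λ}`. -/
def L2set {n : ℕ} (A : Matrix (Fin n) (Fin n) B) (lam : B) (L : Finset (Fin n)) :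
    Finset (Fin n) :=
  L.filter fun i => (⨆ j ∈ L, A i j) < lam

/-- `L^{>λ,L₁} = {k ∈ L : max_{i ∈ L₁} a_{ik} > λ}`. -/
def LgtL1set {n : ℕ} (A : Matrix (Fin n) (Fin n) B) (lam : B) (L : Finset (Fin n)) :
    Finset (Fin n) :=
  L.filter fun k => lam < ⨆ i ∈ L1set A lam L, A i k

/-- `L^{>λ,K} = {ℓ ∈ L : max_{k ∈ K} ((A_{KK})* ⊗ A_{KL})_{kℓ} > λ}`. (The matrix
`(A_{KK})* ⊗ A_{K,N}` has, for `ℓ ∈ L`, exactly the same entries in column `ℓ` as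
`(A_{KK})* ⊗ A_{KL}`.) -/
def LgtKset {n : ℕ} (A : Matrix (Fin n) (Fin n) B) (lam : B) (K L : Finset (Fin n)) :
    Finset (Fin n) :=
  L.filter fun ℓ =>
    lam < ⨆ k : ↥K, mmMul (mmStar (subM A K K)) (fun (p : ↥K) (q : Fin n) => A p q) k ℓ

/-- `L' = L^{>λ,L₁} ∪ L^{>λ,K}`. -/
def LprimeSet {n : ℕ} (A : Matrix (Fin n) (Fin n) B) (lam : B) (K L : Finset (Fin n)) :
    Finset (Fin n) :=
  LgtL1set A lam L ∪ LgtKset A lam K L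

/-- `L̃ = L \ L'`. -/
def LtilSet {n : ℕ} (A : Matrix (Fin n) (Fin n) B) (lam : B) (K L : Finset (Fin n)) :
    Finset (Fin n) :=
  L \ LprimeSet A lam K L

/-- The submatrix `Λ_{P,Q}` of the matrix `Λ` with `Λ_{ii} = 1` and `Λ_{ij} = λ` for `i ≠ j`. -/
def LamSub {n : ℕ} (lam : B) (P Q : Finset (Fin n)) : Matrix ↥P ↥Q B :=
  fun p q => if (p : Fin n) = (q : Fin n) then 1 else lam

/-!
Everything rests on the Kleene star of a max-min matrix `A` over a finite index set `α`.
By pigeonhole a path of length `card α` repeats a vertex, so `A^{card α} ≤ A*` and, more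
precisely, `(A^{card α})_{kj} ≤ ⨆ᵢ A*_{ki} ⊓ A⁺_{ii} ⊓ A*_{ij}`. Hence a solution of
`x = A ⊗ x ⊕ b` with `x ≤ λ` is `x = A* ⊗ b ⊕ A*_λ ⊗ x`, and conversely every
`A* ⊗ b ⊕ A*_λ ⊗ z` solves that equation because `A ⊗ A*_λ = A*_λ`.

For a `(K,L)` `λ`-eigenvector the `K`-rows are this equation for `A_{KK}` with
`b = A_{KL} ⊗ x_L`, and the `L`-rows say `(A ⊗ x)_ℓ = λ`. An index of `L'` carries an entry
`> λ` into a row whose value is at most `λ`, which forces `x_ℓ = λ` there; on `L̃` the value is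
free: by `L₂ = ∅` every `L`-row already reaches `λ`, and the entries of `A_{LL̃}` and of
`(A_{KK})* ⊗ A_{KL̃}` are `≤ λ`, so raising `x_{L̃}` changes neither the `L`-rows nor `x_K ≤ λ`.
-/

open Finset

section MaxMin

variable {α β γ δ : Type*}

lemma exists_le_of_le_iSup {ι X : Type*} [CompleteLinearOrder X] [Finite ι] {f : ι → X} {c : X}
    (hc : ⊥ < c) (h : c ≤ ⨆ i, f i) : ∃ i, c ≤ f i := by
  rcases isEmpty_or_nonempty ι with _ | _
  · rw [iSup_of_empty] at h
    exact absurd (h.trans_lt hc) (lt_irrefl c)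
  · obtain ⟨j, hj⟩ := Finite.exists_max f
    exact ⟨j, h.trans (iSup_le hj)⟩

lemma iSup_eq_iSup_subtype_sup {α X : Type*} [Fintype α] [DecidableEq α] [CompleteLattice X]
    {K L : Finset α} (hU : K ∪ L = univ) (f : α → X) :
    ⨆ j, f j = (⨆ j : K, f j) ⊔ ⨆ j : L, f j := by
  refine le_antisymm (iSup_le fun j => ?_)
    (sup_le (iSup_le fun j => le_iSup f j) (iSup_le fun j => le_iSup f j))
  rcases mem_union.mp (hU ▸ mem_univ j) with h | h
  · exact le_sup_of_le_left (le_iSup_of_le ⟨j, h⟩ le_rfl)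
  · exact le_sup_of_le_right (le_iSup_of_le ⟨j, h⟩ le_rfl)

lemma le_of_lt_of_inf_le {X : Type*} [LinearOrder X] {a y c : X} (ha : c < a)
    (h : a ⊓ y ≤ c) : y ≤ c :=
  (inf_le_iff.mp h).resolve_left (not_le.mpr ha)

lemma mmVec_le_of_forall_le {M : Matrix α β B} {x : β → B} {c : B} {i : α}
    (h : ∀ j, M i j ≤ c) : mmVec M x i ≤ c :=
  iSup_le fun j => inf_le_left.trans (h j)

lemma mmVec_mono_right (A : Matrix α β B) {u v : β → B} (h : u ≤ v) : mmVec A u ≤ mmVec A v :=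
  fun _ => iSup_mono fun j => inf_le_inf_left _ (h j)

lemma mmVec_mono_left {A C : Matrix α β B} (h : ∀ i j, A i j ≤ C i j) (x : β → B) :
    mmVec A x ≤ mmVec C x :=
  fun i => iSup_mono fun j => inf_le_inf_right _ (h i j)

lemma mmVec_sup (A : Matrix α β B) (u v : β → B) :
    mmVec A (u ⊔ v) = mmVec A u ⊔ mmVec A v := by
  funext i
  simp only [mmVec, Pi.sup_apply, inf_sup_left, iSup_sup_eq]

lemma mmVec_matrix_sup (A C : Matrix α β B) (x : β → B) :
    mmVec (fun i j => A i j ⊔ C i j) x = mmVec A x ⊔ mmVec C x := by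
  funext i
  simp only [mmVec, Pi.sup_apply, inf_sup_right, iSup_sup_eq]

lemma inf_mmVec_one (A : Matrix α β B) (c : B) (i : α) :
    c ⊓ mmVec A (fun _ => 1) i = mmVec A (fun _ => c) i := by
  simp only [mmVec, inf_iSup_eq]
  exact iSup_congr fun j => by rw [inf_comm, inf_assoc, inf_of_le_right unitInterval.le_one']

lemma mmVec_mmMul (A : Matrix α β B) (C : Matrix β γ B) (x : γ → B) :
    mmVec (mmMul A C) x = mmVec A (mmVec C x) := by
  funext i
  simp only [mmVec, mmMul, iSup_inf_eq, inf_iSup_eq, inf_assoc]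
  exact iSup_comm

lemma mmMul_assoc (A : Matrix α β B) (C : Matrix β γ B) (D : Matrix γ δ B) :
    mmMul (mmMul A C) D = mmMul A (mmMul C D) := by
  funext i l
  exact congrFun (mmVec_mmMul A C fun j => D j l) i

lemma mmVec_mmId [DecidableEq α] (x : α → B) : mmVec (mmId α) x = x := by
  funext i
  refine le_antisymm (iSup_le fun j => ?_) (le_iSup_of_le i ?_)
  · by_cases h : i = j
    · subst h; exact inf_le_right
    · simp [mmId, h]
  · simp only [mmId]
    exact le_inf unitInterval.le_one' le_rfl

lemma mmId_mmMul [DecidableEq α] (C : Matrix α β B) : mmMul (mmId α) C = C := by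
  funext i l
  exact congrFun (mmVec_mmId fun j => C j l) i

end MaxMin

section Powers

variable {α : Type*} [DecidableEq α] (A : Matrix α α B)

lemma mmPow_add (a b : ℕ) : mmPow A (a + b) = mmMul (mmPow A a) (mmPow A b) := by
  induction a with
  | zero => rw [zero_add, mmPow, mmId_mmMul]
  | succ a ih => rw [Nat.succ_add, mmPow, mmPow, ih, mmMul_assoc]

lemma mmVec_mmPow_le {x : α → B} (hx : mmVec A x ≤ x) (p : ℕ) : mmVec (mmPow A p) x ≤ x := by
  induction p with
  | zero => rw [mmPow, mmVec_mmId]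
  | succ p ih => rw [mmPow, mmVec_mmMul]; exact (mmVec_mono_right A ih).trans hx

lemma le_mmPow_of_path {c : B} :
    ∀ (p : ℕ) (v : ℕ → α), (∀ t < p, c ≤ A (v t) (v (t + 1))) → c ≤ mmPow A p (v 0) (v p)
  | 0, v, _ => by simp [mmPow, mmId, unitInterval.le_one']
  | p + 1, v, hv => le_iSup_of_le (v 1) <| le_inf (hv 0 p.succ_pos) <|
      le_mmPow_of_path p (fun t => v (t + 1)) fun t ht => hv (t + 1) (by omega)

lemma le_mmPow_of_path_segment {c : B} {m : ℕ} (v : ℕ → α)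
    (hv : ∀ t < m, c ≤ A (v t) (v (t + 1))) {s t : ℕ} (hst : s ≤ t) (htm : t ≤ m) :
    c ≤ mmPow A (t - s) (v s) (v t) := by
  have h := le_mmPow_of_path A (t - s) (fun r => v (s + r)) fun r hr => hv (s + r) (by omega)
  rwa [add_zero, Nat.add_sub_cancel' hst] at h

lemma exists_path_of_le_mmPow [Finite α] {c : B} (hc : 0 < c) :
    ∀ {p : ℕ} {i j : α}, c ≤ mmPow A p i j →
      ∃ v : ℕ → α, v 0 = i ∧ v p = j ∧ ∀ t < p, c ≤ A (v t) (v (t + 1))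
  | 0, i, j, h => by
    by_cases hij : i = j
    · exact ⟨fun _ => i, rfl, hij, fun t ht => absurd ht t.not_lt_zero⟩
    · simp only [mmPow, mmId, if_neg hij] at h
      exact absurd (h.trans_lt hc) (lt_irrefl c)
  | p + 1, i, j, h => by
    obtain ⟨k, hk⟩ := exists_le_of_le_iSup hc h
    obtain ⟨v, hv0, hvp, hv⟩ := exists_path_of_le_mmPow hc (le_inf_iff.mp hk).2
    refine ⟨fun | 0 => i | t + 1 => v t, rfl, hvp, fun t ht => ?_⟩
    rcases t with _ | t
    · show c ≤ A i (v 0)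
      exact hv0 ▸ (le_inf_iff.mp hk).1
    · exact hv t (by omega)

end Powers

section Star

variable {α : Type*} [Fintype α] [DecidableEq α] (A : Matrix α α B)

lemma exists_cycle_of_le_mmPow_card {c : B} (hc : 0 < c) {i j : α}
    (h : c ≤ mmPow A (Fintype.card α) i j) :
    ∃ k a b d, a + b + d = Fintype.card α ∧ 0 < b ∧
      c ≤ mmPow A a i k ∧ c ≤ mmPow A b k k ∧ c ≤ mmPow A d k j := by
  set m := Fintype.card α
  obtain ⟨v, rfl, rfl, hv⟩ := exists_path_of_le_mmPow A hc h
  obtain ⟨s, t, hst, hvst⟩ : ∃ s t : ℕ, s < t ∧ t ≤ m ∧ v s = v t := by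
    obtain ⟨s, t, hne, heq⟩ := Fintype.exists_ne_map_eq_of_card_lt (fun r : Fin (m + 1) => v r)
      (by simp [m])
    rcases lt_or_gt_of_ne hne with hlt | hlt
    · exact ⟨s, t, hlt, Fin.is_le t, heq⟩
    · exact ⟨t, s, hlt, Fin.is_le s, heq.symm⟩
  refine ⟨v s, s, t - s, m - t, by omega, by omega, ?_, ?_, ?_⟩
  · simpa using le_mmPow_of_path_segment A v hv (Nat.zero_le s) (by omega)
  · simpa [hvst.2] using le_mmPow_of_path_segment A v hv hst.le hvst.1
  · simpa [hvst.2] using le_mmPow_of_path_segment A v hv hvst.1 le_rfl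

lemma mmPow_le_mmStar {p : ℕ} (hp : p ≤ Fintype.card α) (i j : α) :
    mmPow A p i j ≤ mmStar A i j := by
  obtain hp | rfl := hp.lt_or_eq
  · exact le_iSup₂_of_le p (mem_range.mpr hp) le_rfl
  obtain h0 | h0 := eq_bot_or_bot_lt (mmPow A (Fintype.card α) i j)
  · exact h0 ▸ bot_le
  obtain ⟨k, a, b, d, habd, hb, hik, -, hkj⟩ := exists_cycle_of_le_mmPow_card A h0 le_rfl
  have hshort : mmPow A (Fintype.card α) i j ≤ mmPow A (a + d) i j := by
    rw [mmPow_add]; exact le_iSup_of_le k (le_inf hik hkj)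
  exact hshort.trans (le_iSup₂_of_le (a + d) (mem_range.mpr (by omega)) le_rfl)

lemma mmPlus_le_mmStar (i j : α) : mmPlus A i j ≤ mmStar A i j :=
  iSup₂_le fun _ hp => mmPow_le_mmStar A (mem_Icc.mp hp).2 i j

lemma mmPow_card_le_cycle (i j : α) :
    mmPow A (Fintype.card α) i j ≤ ⨆ k, mmStar A i k ⊓ mmPlus A k k ⊓ mmStar A k j := by
  obtain h0 | h0 := eq_bot_or_bot_lt (mmPow A (Fintype.card α) i j)
  · exact h0 ▸ bot_le
  obtain ⟨k, a, b, d, habd, hb, hik, hkk, hkj⟩ := exists_cycle_of_le_mmPow_card A h0 le_rfl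
  refine le_iSup_of_le k (le_inf (le_inf ?_ ?_) ?_)
  · exact hik.trans (mmPow_le_mmStar A (by omega) i k)
  · exact hkk.trans (le_iSup₂_of_le b (mem_Icc.mpr ⟨hb, by omega⟩) le_rfl)
  · exact hkj.trans (mmPow_le_mmStar A (by omega) k j)

lemma mmId_le_mmStar (i j : α) : mmId α i j ≤ mmStar A i j :=
  le_iSup₂_of_le 0 (mem_range.mpr (Fintype.card_pos_iff.mpr ⟨i⟩)) le_rfl

lemma mmStar_le_mmId_sup_mmPlus (i j : α) : mmStar A i j ≤ mmId α i j ⊔ mmPlus A i j := by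
  refine iSup₂_le fun p hp => ?_
  rcases p with _ | p
  · exact le_sup_left
  · exact le_sup_of_le_right
      (le_iSup₂_of_le (p + 1) (mem_Icc.mpr ⟨by omega, (mem_range.mp hp).le⟩) le_rfl)

lemma mmMul_mmStar : mmMul A (mmStar A) = mmPlus A := by
  funext i j
  refine le_antisymm (iSup_le fun k => ?_) (iSup₂_le fun q hq => ?_)
  · simp only [mmStar, inf_iSup_eq]
    refine iSup₂_le fun p hp => le_iSup₂_of_le (p + 1)
      (mem_Icc.mpr ⟨by omega, mem_range.mp hp⟩) (le_iSup_of_le k le_rfl)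
  · obtain ⟨p, rfl⟩ : ∃ p, q = p + 1 := ⟨q - 1, by have := (mem_Icc.mp hq).1; omega⟩
    exact iSup_mono fun k =>
      inf_le_inf_left _ (le_iSup₂_of_le p (mem_range.mpr (mem_Icc.mp hq).2) le_rfl)

lemma mmVec_mmStar (b : α → B) : mmVec (mmStar A) b = b ⊔ mmVec (mmPlus A) b := by
  refine le_antisymm ?_ (sup_le ?_ ?_)
  · calc mmVec (mmStar A) b ≤ mmVec (fun i j => mmId α i j ⊔ mmPlus A i j) b :=
          mmVec_mono_left (mmStar_le_mmId_sup_mmPlus A) b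
      _ = b ⊔ mmVec (mmPlus A) b := by rw [mmVec_matrix_sup, mmVec_mmId]
  · calc b = mmVec (mmId α) b := (mmVec_mmId b).symm
      _ ≤ mmVec (mmStar A) b := mmVec_mono_left (mmId_le_mmStar A) b
  · exact mmVec_mono_left (mmPlus_le_mmStar A) b

lemma mmVec_mmVec_mmStar_sup (b : α → B) :
    mmVec A (mmVec (mmStar A) b) ⊔ b = mmVec (mmStar A) b := by
  rw [← mmVec_mmMul, mmMul_mmStar, mmVec_mmStar, sup_comm]

lemma mmVec_mmStar_le {x : α → B} (hx : mmVec A x ≤ x) : mmVec (mmStar A) x ≤ x := fun i =>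
  iSup_le fun j => by
    simp only [mmStar, iSup₂_inf_eq]
    exact iSup₂_le fun p _ =>
      (le_iSup (fun j => mmPow A p i j ⊓ x j) j).trans (mmVec_mmPow_le A hx p i)

lemma mmPlus_inf_mmStar (k i : α) : mmPlus A i i ⊓ mmStar A k i = mmPlus A i i ⊓ mmPlus A k i := by
  refine le_antisymm (le_inf inf_le_left ?_) (inf_le_inf_left _ (mmPlus_le_mmStar A k i))
  refine (inf_le_inf_left _ (mmStar_le_mmId_sup_mmPlus A k i)).trans ?_
  rw [inf_sup_left]
  refine sup_le ?_ inf_le_right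
  by_cases h : k = i
  · subst h; exact inf_le_left
  · simp [mmId, h]

lemma mmMul_mmStarLam (lam : B) : mmMul A (mmStarLam A lam) = mmStarLam A lam := by
  funext k i
  calc mmMul A (mmStarLam A lam) k i = lam ⊓ mmPlus A i i ⊓ mmMul A (mmStar A) k i := by
        simp only [mmMul, mmStarLam, inf_iSup_eq]
        exact iSup_congr fun j => inf_left_comm _ _ _
    _ = mmStarLam A lam k i := by
        rw [mmMul_mmStar, mmStarLam, inf_assoc, inf_assoc, mmPlus_inf_mmStar]

end Star

section FixedPoint

variable {α : Type*} [Fintype α] [DecidableEq α] (A : Matrix α α B)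

lemma mmVec_mmStar_eq_of_le {x : α → B} (hx : mmVec A x ≤ x) : mmVec (mmStar A) x = x :=
  le_antisymm (mmVec_mmStar_le A hx) (by rw [mmVec_mmStar]; exact le_sup_left)

lemma mmVec_mmStar_sup_mmStarLam_fixed (lam : B) (b z : α → B) :
    mmVec A (mmVec (mmStar A) b ⊔ mmVec (mmStarLam A lam) z) ⊔ b =
      mmVec (mmStar A) b ⊔ mmVec (mmStarLam A lam) z := by
  rw [mmVec_sup, ← mmVec_mmMul A (mmStarLam A lam), mmMul_mmStarLam, sup_right_comm,
    mmVec_mmVec_mmStar_sup]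

lemma le_mmVec_mmPow_sup_mmVec_mmStar {x b : α → B} (hx : mmVec A x ⊔ b = x) (p : ℕ) :
    x ≤ mmVec (mmPow A p) x ⊔ mmVec (mmStar A) b := by
  induction p with
  | zero => rw [mmPow, mmVec_mmId]; exact le_sup_left
  | succ p ih =>
    calc x = mmVec A x ⊔ b := hx.symm
      _ ≤ mmVec A (mmVec (mmPow A p) x ⊔ mmVec (mmStar A) b) ⊔ b :=
          sup_le_sup_right (mmVec_mono_right A ih) b
      _ = mmVec (mmPow A (p + 1)) x ⊔ mmVec (mmStar A) b := by
          rw [mmVec_sup, sup_assoc, mmVec_mmVec_mmStar_sup, mmPow, mmVec_mmMul]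

lemma inf_mmVec_mmPow_card_le (lam : B) {x : α → B} (hx : mmVec A x ≤ x) (k : α) :
    lam ⊓ mmVec (mmPow A (Fintype.card α)) x k ≤ mmVec (mmStarLam A lam) x k := by
  have hS (i j : α) : mmStar A i j ⊓ x j ≤ x i :=
    (le_iSup (fun j => mmStar A i j ⊓ x j) j).trans (mmVec_mmStar_le A hx i)
  show lam ⊓ ⨆ j, mmPow A _ k j ⊓ x j ≤ ⨆ i, (lam ⊓ mmPlus A i i ⊓ mmStar A k i) ⊓ x i
  rw [inf_iSup_eq]
  refine iSup_le fun j => ?_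
  calc lam ⊓ (mmPow A _ k j ⊓ x j)
      ≤ lam ⊓ ((⨆ i, mmStar A k i ⊓ mmPlus A i i ⊓ mmStar A i j) ⊓ x j) := by
        gcongr; exact mmPow_card_le_cycle A k j
    _ = ⨆ i, (lam ⊓ mmPlus A i i ⊓ mmStar A k i) ⊓ (mmStar A i j ⊓ x j) := by
        rw [iSup_inf_eq, inf_iSup_eq]
        exact iSup_congr fun i => by ac_rfl
    _ ≤ ⨆ i, (lam ⊓ mmPlus A i i ⊓ mmStar A k i) ⊓ x i :=
        iSup_mono fun i => inf_le_inf_left _ (hS i j)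

lemma eq_mmStar_sup_mmStarLam_of_le {lam : B} {x b : α → B} (hlam : ∀ k, x k ≤ lam)
    (hx : mmVec A x ⊔ b = x) : x = mmVec (mmStar A) b ⊔ mmVec (mmStarLam A lam) x := by
  have hAx : mmVec A x ≤ x := le_sup_left.trans hx.le
  refine le_antisymm (fun k => ?_) (sup_le ?_ ?_)
  · calc x k = lam ⊓ x k := (inf_of_le_right (hlam k)).symm
      _ ≤ lam ⊓ (mmVec (mmPow A (Fintype.card α)) x k ⊔ mmVec (mmStar A) b k) :=
          inf_le_inf_left _ (le_mmVec_mmPow_sup_mmVec_mmStar A hx _ k)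
      _ ≤ mmVec (mmStarLam A lam) x k ⊔ mmVec (mmStar A) b k := by
          rw [inf_sup_left]
          exact sup_le_sup (inf_mmVec_mmPow_card_le A lam hAx k) inf_le_right
      _ = _ := sup_comm _ _
  · exact (mmVec_mono_right _ (le_sup_right.trans hx.le)).trans (mmVec_mmStar_le A hAx)
  · exact (mmVec_mono_left (fun _ _ => inf_le_right) x).trans (mmVec_mmStar_le A hAx)

end FixedPoint

section Eigenvectors

variable {n : ℕ}

section LamSub

variable (lam : B) {P Q R : Finset (Fin n)}

lemma le_mmVec_LamSub (z : P → B) (q : Q) (p : P) (h : (p : Fin n) = q) :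
    z p ≤ mmVec (LamSub lam Q P) z q :=
  le_iSup_of_le p (by simp only [LamSub, h, if_true]; exact le_inf unitInterval.le_one' le_rfl)

lemma sup_mmVec_LamSub_of_mem (z : P → B) (q : Q) (hq : (q : Fin n) ∈ P) :
    lam ⊔ mmVec (LamSub lam Q P) z q = lam ⊔ z ⟨q, hq⟩ := by
  refine le_antisymm (sup_le le_sup_left (iSup_le fun p => ?_))
    (sup_le_sup_left (le_mmVec_LamSub lam z q _ rfl) _)
  by_cases h : (q : Fin n) = p
  · obtain rfl : p = ⟨q, hq⟩ := Subtype.ext h.symm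
    exact inf_le_right.trans le_sup_right
  · simp only [LamSub, h, if_false]
    exact inf_le_left.trans le_sup_left

lemma sup_mmVec_LamSub_of_notMem (z : P → B) (q : Q) (hq : (q : Fin n) ∉ P) :
    lam ⊔ mmVec (LamSub lam Q P) z q = lam :=
  sup_eq_left.mpr <| mmVec_le_of_forall_le (fun p => by
    simp only [LamSub, show (q : Fin n) ≠ p from fun h => hq (h ▸ p.2), if_false, le_refl])

variable (A : Matrix (Fin n) (Fin n) B) (K : Finset (Fin n))

lemma mmVec_const_sup_mmVec_LamSub (hPQ : P ⊆ Q) (hQR : Q ⊆ R) (z : P → B) (k : K) :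
    mmVec (subM A K R) (fun _ => lam) k ⊔ mmVec (subM A K Q) (mmVec (LamSub lam Q P) z) k =
      mmVec (subM A K R) (fun _ => lam) k ⊔ mmVec (subM A K P) z k := by
  refine le_antisymm (sup_le le_sup_left (iSup_le fun q => ?_)) (sup_le_sup_left
    (iSup_le fun p => le_iSup_of_le ⟨p, hPQ p.2⟩
      (inf_le_inf_left _ (le_mmVec_LamSub lam z _ p rfl))) _)
  simp only [mmVec, inf_iSup_eq]
  refine iSup_le fun p => ?_
  by_cases h : (q : Fin n) = p
  · refine le_sup_of_le_right (le_iSup_of_le p ?_)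
    simp only [subM, LamSub, h, if_true]
    exact inf_le_inf_left _ inf_le_right
  · refine le_sup_of_le_left (le_iSup_of_le ⟨q, hQR q.2⟩ ?_)
    simp only [subM, LamSub, h, if_false]
    exact inf_le_inf_left _ inf_le_left

lemma inf_mmVec_one_sup_mmVec_LamSub_eq {ι : Type*} (S : Matrix ι K B) {L : Finset (Fin n)}
    (hPL : P ⊆ L) (z : P → B) (i : ι) :
    lam ⊓ mmVec (mmMul S (subM A K L)) (fun _ => 1) i ⊔
        mmVec (mmMul (mmMul S (subM A K P)) (LamSub lam P P)) z i =
      mmVec S (mmVec (subM A K L) (fun ℓ => lam ⊔ mmVec (LamSub lam L P) z ℓ)) i := by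
  have hblock : mmVec (subM A K L) (fun _ => lam) ⊔
      mmVec (subM A K P) (mmVec (LamSub lam P P) z) =
      mmVec (subM A K L) (fun ℓ => lam ⊔ mmVec (LamSub lam L P) z ℓ) := by
    funext k
    rw [Pi.sup_apply, mmVec_const_sup_mmVec_LamSub lam A K subset_rfl hPL,
      ← mmVec_const_sup_mmVec_LamSub lam A K hPL subset_rfl]
    exact (congrFun (mmVec_sup _ (fun _ => lam) (mmVec (LamSub lam L P) z)) k).symm
  rw [inf_mmVec_one, mmMul_assoc, mmVec_mmMul, mmVec_mmMul, mmVec_mmMul, ← hblock, mmVec_sup]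
  rfl

end LamSub

lemma mmVec_eq_sup_subM {K L : Finset (Fin n)} (hU : K ∪ L = univ)
    (A : Matrix (Fin n) (Fin n) B) (x : Fin n → B) (k : K) :
    mmVec A x k = mmVec (subM A K K) (subV x K) k ⊔ mmVec (subM A K L) (subV x L) k :=
  iSup_eq_iSup_subtype_sup hU _

variable {A : Matrix (Fin n) (Fin n) B} {lam : B} {K L : Finset (Fin n)} {x : Fin n → B}

lemma LtilSet_subset : LtilSet A lam K L ⊆ L := sdiff_subset

lemma mem_L1set_of_L2set_eq_empty (hL2 : L2set A lam L = ∅) {i : Fin n} (hi : i ∈ L) :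
    i ∈ L1set A lam L := by
  refine mem_filter.mpr ⟨hi, not_lt.mp fun h => ?_⟩
  have : i ∈ L2set A lam L := mem_filter.mpr ⟨hi, h⟩
  simp [hL2] at this

lemma le_lam_of_mem_LtilSet (hL2 : L2set A lam L = ∅) {i j : Fin n} (hi : i ∈ L)
    (hj : j ∈ LtilSet A lam K L) : A i j ≤ lam := by
  have hj' := mem_sdiff.mp hj
  have : ¬ lam < ⨆ i ∈ L1set A lam L, A i j := fun h =>
    hj'.2 (mem_union_left _ (mem_filter.mpr ⟨hj'.1, h⟩))
  exact (le_iSup₂_of_le i (mem_L1set_of_L2set_eq_empty hL2 hi) le_rfl).trans (not_lt.mp this)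

lemma mmMul_mmStar_le_of_mem_LtilSet (k : K) {j : Fin n} (hj : j ∈ LtilSet A lam K L) :
    mmMul (mmStar (subM A K K)) (fun (p : K) (q : Fin n) => A p q) k j ≤ lam := by
  have hj' := mem_sdiff.mp hj
  have : ¬ lam < ⨆ k : K, mmMul (mmStar (subM A K K)) (fun (p : K) (q : Fin n) => A p q) k j :=
    fun h => hj'.2 (mem_union_right _ (mem_filter.mpr ⟨hj'.1, h⟩))
  exact (le_iSup_of_le k le_rfl).trans (not_lt.mp this)

lemma IsKLEig.mmVec_eq_of_mem (hx : IsKLEig A lam K L x) {k : Fin n} (hk : k ∈ K) :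
    mmVec A x k = x k := by
  rw [hx.1]
  exact inf_of_le_right (hx.2.1 k hk)

lemma IsKLEig.mmVec_subM_le (hx : IsKLEig A lam K L x) :
    mmVec (subM A K K) (subV x K) ≤ subV x K := fun k => by
  calc ⨆ j : K, A k j ⊓ x j ≤ ⨆ j, A k j ⊓ x j :=
        iSup_le fun j => le_iSup (fun j => A k j ⊓ x j) (j : Fin n)
    _ = x k := hx.mmVec_eq_of_mem k.2

lemma IsKLEig.eq_lam_of_notMem_LtilSet (hx : IsKLEig A lam K L x) {ℓ : Fin n} (hℓ : ℓ ∈ L)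
    (hℓP : ℓ ∉ LtilSet A lam K L) : x ℓ = lam := by
  refine le_antisymm ?_ (hx.2.2 ℓ hℓ)
  have hℓ' : ℓ ∈ LprimeSet A lam K L := by
    by_contra h
    exact hℓP (mem_sdiff.mpr ⟨hℓ, h⟩)
  rcases mem_union.mp hℓ' with h | h
  · obtain ⟨i, hi⟩ := lt_iSup_iff.mp (mem_filter.mp h).2
    obtain ⟨-, hi⟩ := lt_iSup_iff.mp hi
    refine le_of_lt_of_inf_le hi ?_
    calc A i ℓ ⊓ x ℓ ≤ mmVec A x i := le_iSup (fun j => A i j ⊓ x j) ℓ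
      _ = lam ⊓ x i := congrFun hx.1 i
      _ ≤ lam := inf_le_left
  · obtain ⟨k, hk⟩ := lt_iSup_iff.mp (mem_filter.mp h).2
    refine le_of_lt_of_inf_le hk ?_
    calc _ ≤ mmVec (mmMul (mmStar (subM A K K)) (fun (p : K) (q : Fin n) => A p q)) x k :=
          le_iSup (fun j => _ ⊓ x j) ℓ
      _ = mmVec (mmStar (subM A K K)) (fun p : K => mmVec A x p) k :=
          congrFun (mmVec_mmMul _ (fun (p : K) (q : Fin n) => A p q) x) k
      _ = mmVec (mmStar (subM A K K)) (subV x K) k := by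
          congr 1
          funext p
          exact hx.mmVec_eq_of_mem p.2
      _ ≤ x k := mmVec_mmStar_le _ hx.mmVec_subM_le k
      _ ≤ lam := hx.2.1 k k.2

lemma IsKLEig.eq_lam_sup_mmVec_LamSub (hx : IsKLEig A lam K L x) (ℓ : L) :
    x ℓ = lam ⊔ mmVec (LamSub lam L (LtilSet A lam K L)) (subV x _) ℓ := by
  by_cases h : (ℓ : Fin n) ∈ LtilSet A lam K L
  · rw [sup_mmVec_LamSub_of_mem lam _ ℓ h]
    exact (sup_eq_right.mpr (hx.2.2 ℓ ℓ.2)).symm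
  · rw [sup_mmVec_LamSub_of_notMem lam _ ℓ h]
    exact hx.eq_lam_of_notMem_LtilSet ℓ.2 h

lemma IsKLEig.eq_mmStar_sup_mmStarLam (hU : K ∪ L = univ) (hx : IsKLEig A lam K L x) (k : K) :
    x k = mmVec (mmStar (subM A K K)) (mmVec (subM A K L) (subV x L)) k ⊔
      mmVec (mmStarLam (subM A K K) lam) (subV x K) k :=
  congrFun (eq_mmStar_sup_mmStarLam_of_le (subM A K K) (fun k => hx.2.1 k k.2)
    (funext fun k => (mmVec_eq_sup_subM hU A x k).symm.trans (hx.mmVec_eq_of_mem k.2))) k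

lemma IsKLEig.mmVec_mmStar_eq (hx : IsKLEig A lam K L x) : mmVec (mmStar A) x = x :=
  mmVec_mmStar_eq_of_le A fun i => (congrFun hx.1 i).trans_le inf_le_right

lemma mmVec_eq_lam_of_mem (hU : K ∪ L = univ) (hL2 : L2set A lam L = ∅)
    (hK : ∀ i ∈ K, x i ≤ lam) (hL : ∀ i ∈ L, lam ≤ x i)
    (hflat : ∀ i ∈ L, i ∉ LtilSet A lam K L → x i = lam) {ℓ : Fin n} (hℓ : ℓ ∈ L) :
    mmVec A x ℓ = lam := by
  refine le_antisymm (iSup_le fun j => ?_) ?_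
  · rcases mem_union.mp (hU ▸ mem_univ j) with hj | hj
    · exact inf_le_right.trans (hK j hj)
    · by_cases hjP : j ∈ LtilSet A lam K L
      · exact inf_le_left.trans (le_lam_of_mem_LtilSet hL2 hℓ hjP)
      · exact inf_le_right.trans (hflat j hj hjP).le
  · have h := (mem_filter.mp (mem_L1set_of_L2set_eq_empty hL2 hℓ)).2
    calc lam = (⨆ j ∈ L, A ℓ j) ⊓ lam := (inf_of_le_right h).symm
      _ = ⨆ j ∈ L, A ℓ j ⊓ lam := iSup₂_inf_eq _
      _ ≤ mmVec A x ℓ := iSup₂_le fun j hj => le_iSup_of_le j (inf_le_inf_left _ (hL j hj))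

lemma isKLEig_of_eq (hU : K ∪ L = univ) (hL2 : L2set A lam L = ∅)
    (z : LtilSet A lam K L → B) (zK : K → B)
    (ha : ∀ ℓ : L, x ℓ = lam ⊔ mmVec (LamSub lam L (LtilSet A lam K L)) z ℓ)
    (hb : ∀ k : K, x k =
      (lam ⊓ mmVec (mmMul (mmStar (subM A K K)) (subM A K L)) (fun _ => 1) k) ⊔
      mmVec (mmMul (mmMul (mmStar (subM A K K)) (subM A K (LtilSet A lam K L)))
        (LamSub lam (LtilSet A lam K L) (LtilSet A lam K L))) z k ⊔
      mmVec (mmStarLam (subM A K K) lam) zK k) :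
    IsKLEig A lam K L x := by
  have hL (i : Fin n) (hi : i ∈ L) : lam ≤ x i := le_sup_left.trans (ha ⟨i, hi⟩).ge
  have hflat (i : Fin n) (hi : i ∈ L) (hiP : i ∉ LtilSet A lam K L) : x i = lam :=
    (ha ⟨i, hi⟩).trans (sup_mmVec_LamSub_of_notMem lam z _ hiP)
  have hK (i : Fin n) (hi : i ∈ K) : x i ≤ lam := by
    refine (hb ⟨i, hi⟩).trans_le (sup_le (sup_le inf_le_left ?_) ?_)
    · exact mmVec_le_of_forall_le fun _ => iSup_le fun p =>
        inf_le_left.trans (mmMul_mmStar_le_of_mem_LtilSet _ p.2)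
    · exact mmVec_le_of_forall_le fun _ => inf_le_left.trans inf_le_left
  have hxK : subV x K = mmVec (mmStar (subM A K K)) (mmVec (subM A K L) (subV x L)) ⊔
      mmVec (mmStarLam (subM A K K) lam) zK := funext fun k => by
    show x k = _
    rw [hb k, inf_mmVec_one_sup_mmVec_LamSub_eq lam A K _ LtilSet_subset, ← funext ha]
    rfl
  refine ⟨funext fun i => ?_, hK, hL⟩
  rcases mem_union.mp (hU ▸ mem_univ i) with hi | hi
  · calc mmVec A x i
        = mmVec (subM A K K) (subV x K) ⟨i, hi⟩ ⊔ mmVec (subM A K L) (subV x L) ⟨i, hi⟩ :=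
          mmVec_eq_sup_subM hU A x ⟨i, hi⟩
      _ = subV x K ⟨i, hi⟩ := by
          rw [hxK]
          exact congrFun (mmVec_mmStar_sup_mmStarLam_fixed _ lam _ zK) _
      _ = lam ⊓ x i := (inf_of_le_right (hK i hi)).symm
  · rw [mmVec_eq_lam_of_mem hU hL2 hK hL hflat hi, inf_of_le_left (hL i hi)]

end Eigenvectors

theorem stmt19_general {n : ℕ} (A : Matrix (Fin n) (Fin n) B) (lam : B) (K L : Finset (Fin n))
    (hU : K ∪ L = Finset.univ)
    (hL2 : L2set A lam L = ∅) (x : Fin n → B) :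
    (IsKLEig A lam K L x ↔
      ∃ (zLt : ↥(LtilSet A lam K L) → B) (zK : ↥K → B),
        (∀ ℓ : ↥L,
          x ℓ = lam ⊔ mmVec (LamSub lam L (LtilSet A lam K L)) zLt ℓ) ∧
        (∀ i : ↥K,
          x i =
            (lam ⊓ mmVec (mmMul (mmStar (subM A K K)) (subM A K L)) (fun _ => 1) i) ⊔
            mmVec (mmMul (mmMul (mmStar (subM A K K)) (subM A K (LtilSet A lam K L)))
              (LamSub lam (LtilSet A lam K L) (LtilSet A lam K L))) zLt i ⊔
            mmVec (mmStarLam (subM A K K) lam) zK i)) ∧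
    (IsKLEig A lam K L x → mmVec (mmStar A) x = x) := by
  refine ⟨⟨fun hx => ⟨subV x _, subV x K, hx.eq_lam_sup_mmVec_LamSub, fun k => ?_⟩,
    fun ⟨z, zK, ha, hb⟩ => isKLEig_of_eq hU hL2 z zK ha hb⟩, IsKLEig.mmVec_mmStar_eq⟩
  rw [inf_mmVec_one_sup_mmVec_LamSub_eq lam A K _ LtilSet_subset,
    ← funext hx.eq_lam_sup_mmVec_LamSub]
  exact hx.eq_mmStar_sup_mmStarLam hU k

/-- If `L₂ = ∅`, then `x` is a `(K,L)` `λ`-eigenvector of `A` iff there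
are `z_{L̃}` and `z_K` with `x_L = λ·1_L ⊕ Λ_{L,L̃} ⊗ z_{L̃}` and
`x_K = λ ⊗ (A_{KK})* ⊗ A_{KL} ⊗ 1_L ⊕ (A_{KK})* ⊗ A_{KL̃} ⊗ Λ_{L̃,L̃} ⊗ z_{L̃}`
`⊕ (A_{KK})*_λ ⊗ z_K`. Moreover, every `(K,L)` `λ`-eigenvector `x` of `A` satisfies
`A* ⊗ x = x`. -/
theorem stmt19 {n : ℕ} (A : Matrix (Fin n) (Fin n) B) (lam : B) (K L : Finset (Fin n))
    (hU : K ∪ L = Finset.univ) (hD : Disjoint K L)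
    (hL2 : L2set A lam L = ∅) (x : Fin n → B) :
    (IsKLEig A lam K L x ↔
      ∃ (zLt : ↥(LtilSet A lam K L) → B) (zK : ↥K → B),
        (∀ ℓ : ↥L,
          x ℓ = lam ⊔ mmVec (LamSub lam L (LtilSet A lam K L)) zLt ℓ) ∧
        (∀ i : ↥K,
          x i =
            (lam ⊓ mmVec (mmMul (mmStar (subM A K K)) (subM A K L)) (fun _ => 1) i) ⊔
            mmVec (mmMul (mmMul (mmStar (subM A K K)) (subM A K (LtilSet A lam K L)))
              (LamSub lam (LtilSet A lam K L) (LtilSet A lam K L))) zLt i ⊔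
            mmVec (mmStarLam (subM A K K) lam) zK i)) ∧
    (IsKLEig A lam K L x → mmVec (mmStar A) x = x) :=
  stmt19_general A lam K L hU hL2 x
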